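/- Let R be a commutative ring, S a multiplicatively closed subset of R, and N a submodule of an R-module M with (N :_R M) ∩ S = ∅. Let S* = {x ∈ R : xy ∈ S for some y ∈ R} be the saturation of S. Then N is a weakly S-prime submodule of M if and only if N is a weakly S*-prime submodule of M. -/
import Mathlib


/-- A submodule `N` of an `R`-module `M` is *weakly `T`-prime* (for a multiplicatively
closed subset `T ⊆ R`) if `(N :_R M) ∩ T = ∅` and there exists `s ∈ T` such that for all
`a ∈ R` and `m ∈ M` with `0 ≠ a • m ∈ N`, either `s * a ∈ (N :_R M)` or `s • m ∈ N`. -/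
def IsWeaklySPrime {R M : Type*} [CommRing R] [AddCommGroup M] [Module R M]
    (T : Set R) (N : Submodule R M) : Prop :=
  ((N.colon ⊤ : Set R) ∩ T = ∅) ∧
    ∃ s ∈ T, ∀ (a : R) (m : M), a • m ∈ N → a • m ≠ 0 →
      s * a ∈ N.colon ⊤ ∨ s • m ∈ N

theorem stmt15 {R M : Type*} [CommRing R] [Nontrivial R] [AddCommGroup M] [Module R M]
    (S : Set R) (hS : ∀ a ∈ S, ∀ b ∈ S, a * b ∈ S)
    (N : Submodule R M) (hdisj : (N.colon ⊤ : Set R) ∩ S = ∅) :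
    IsWeaklySPrime S N ↔ IsWeaklySPrime {x : R | ∃ y : R, x * y ∈ S} N := by
  constructor
  · rintro ⟨_, s, hsS, h⟩
    refine ⟨?_, s, ⟨1, by simpa using hsS⟩, h⟩
    ext x
    simp only [Set.mem_inter_iff, Set.mem_setOf_eq, Set.mem_empty_iff_false, iff_false, not_and,
      SetLike.mem_coe]
    rintro hx ⟨y, hxy⟩
    have : x * y ∈ (N.colon ⊤ : Set R) ∩ S := ⟨Ideal.mul_mem_right y _ hx, hxy⟩
    rw [hdisj] at this; exact this
  · rintro ⟨_, s, ⟨y, hsy⟩, h⟩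
    refine ⟨hdisj, s * y, hsy, fun a m ham ham0 => ?_⟩
    rcases h a m ham ham0 with h1 | h2
    · exact Or.inl (by rw [mul_comm s y, mul_assoc]; exact Ideal.mul_mem_left _ y h1)
    · exact Or.inr (by rw [mul_comm s y, mul_smul]; exact Submodule.smul_mem _ y h2)
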